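/- arXiv:2205.05485 — 5 statements merged into one kernel-verified Lean document; each statement's English description precedes it below -/
import Mathlib

section
/- Let τ ∈ C_b(ℝ), let f ∈ 𝒜_τ, let ε > 0, and let K_ε := {x ∈ ℝ : |f(x)| ≥ ε}. Then |τ(x)| ≤ 1 − ε/‖f‖_τ for every x ∈ K_ε (assuming f ≠ 0 so that ‖f‖_τ > 0). -/
open Filter

/-- `f` belongs to the Segal algebra `𝒜_τ`. -/
def MemSegal (τ f : ℝ → ℝ) : Prop :=
  Continuous f ∧ Tendsto f (cocompact ℝ) (nhds 0) ∧
    Summable (fun k : ℕ => ⨆ x : ℝ, |f x * τ x ^ k|)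

/-- The Segal norm `‖f‖_τ = ∑_{k=0}^∞ ‖f·τ^k‖_∞`. -/
noncomputable def segalNorm (τ f : ℝ → ℝ) : ℝ :=
  ∑' k : ℕ, ⨆ x : ℝ, |f x * τ x ^ k|

/-- For `f ∈ 𝒜_τ`, `f ≠ 0`, `ε > 0` and `K_ε = {x : |f x| ≥ ε}`, we have
`|τ x| ≤ 1 − ε/‖f‖_τ` for every `x ∈ K_ε`. -/
theorem segal_tau_bound_on_level_set (τ f : ℝ → ℝ)
    (hτc : Continuous τ) (hτb : ∃ C, ∀ x, |τ x| ≤ C)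
    (hf : MemSegal τ f) (hf0 : f ≠ 0) (ε : ℝ) (hε : 0 < ε) :
    ∀ x : ℝ, ε ≤ |f x| → |τ x| ≤ 1 - ε / segalNorm τ f := by
  intro x hx
  obtain ⟨hfc, hfz, hsum⟩ := hf
  obtain ⟨C, hC⟩ := hτb
  -- f is bounded
  obtain ⟨K, hKcomp, hK⟩ : ∃ K : Set ℝ, IsCompact K ∧ ∀ y ∉ K, |f y| < 1 := by
    have h : ∀ᶠ y in cocompact ℝ, |f y| < 1 := by
      have := Metric.tendsto_nhds.mp hfz 1 one_pos
      simpa [Real.dist_eq] using this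
    rw [Filter.hasBasis_cocompact.eventually_iff] at h
    obtain ⟨K, hK1, hK2⟩ := h
    exact ⟨K, hK1, fun y hy => hK2 hy⟩
  obtain ⟨B, hB⟩ : ∃ B, ∀ y, |f y| ≤ B := by
    obtain ⟨M, hM⟩ := (hKcomp.image (continuous_abs.comp hfc)).bddAbove
    refine ⟨max M 1, fun y => ?_⟩
    by_cases hy : y ∈ K
    · exact le_trans (hM ⟨y, hy, rfl⟩) (le_max_left _ _)
    · exact le_trans (hK y hy).le (le_max_right _ _)
  have hC0 : 0 ≤ C := le_trans (abs_nonneg _) (hC 0)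
  have hbdd : ∀ k : ℕ, BddAbove (Set.range fun y => |f y * τ y ^ k|) := by
    intro k
    refine ⟨B * C ^ k, ?_⟩
    rw [mem_upperBounds]
    rintro v ⟨y, rfl⟩
    dsimp only
    rw [abs_mul, abs_pow]
    exact mul_le_mul (hB y) (pow_le_pow_left₀ (abs_nonneg _) (hC y) k)
      (pow_nonneg (abs_nonneg _) k) (le_trans (abs_nonneg _) (hB y))
  have hterm : ∀ k : ℕ, ε * |τ x| ^ k ≤ ⨆ y : ℝ, |f y * τ y ^ k| := by
    intro k
    refine le_trans ?_ (le_ciSup (hbdd k) x)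
    rw [abs_mul, abs_pow]
    exact mul_le_mul_of_nonneg_right hx (pow_nonneg (abs_nonneg _) k)
  have hsum2 : Summable (fun k : ℕ => ε * |τ x| ^ k) :=
    Summable.of_nonneg_of_le
      (fun k => mul_nonneg hε.le (pow_nonneg (abs_nonneg _) k)) hterm hsum
  have ht1 : |τ x| < 1 := by
    have : Summable (fun k : ℕ => |τ x| ^ k) := by
      have := hsum2.mul_left ε⁻¹
      simpa [← mul_assoc, inv_mul_cancel₀ hε.ne'] using this
    have := summable_geometric_iff_norm_lt_one.mp this
    simpa [abs_abs] using this
  have ht0 : 0 ≤ |τ x| := abs_nonneg _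
  have htsum : ∑' k : ℕ, ε * |τ x| ^ k = ε * (1 - |τ x|)⁻¹ := by
    rw [tsum_mul_left, tsum_geometric_of_lt_one ht0 ht1]
  have hle : ε * (1 - |τ x|)⁻¹ ≤ segalNorm τ f := by
    rw [← htsum]
    exact Summable.tsum_le_tsum hterm hsum2 hsum
  have hNpos : 0 < segalNorm τ f := by
    have h0 : ε ≤ ⨆ y : ℝ, |f y * τ y ^ 0| := by simpa using hterm 0
    have : (⨆ y : ℝ, |f y * τ y ^ 0|) ≤ segalNorm τ f :=
      Summable.le_tsum hsum 0 (fun k _ => le_trans (abs_nonneg _) (le_ciSup (hbdd k) x))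
    linarith
  have h1t : 0 < 1 - |τ x| := by linarith
  have h2 : ε ≤ segalNorm τ f * (1 - |τ x|) := by
    have := mul_le_mul_of_nonneg_right hle h1t.le
    rwa [mul_assoc, inv_mul_cancel₀ h1t.ne', mul_one] at this
  have h3 : ε / segalNorm τ f ≤ 1 - |τ x| := by
    rw [div_le_iff₀ hNpos]
    linarith [mul_comm (segalNorm τ f) (1 - |τ x|)]
  linarith
end

section
/- Let τ ∈ C_b(ℝ). The set {f ∈ 𝒜_τ ∩ C_c(ℝ) : supp f ⊆ {x : |τ(x)| ≤ ε} for some ε ∈ (0,1)} is dense in 𝒜_τ with respect to the norm ‖·‖_τ. -/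
/-!
If `f ∈ 𝒜_τ` and `f x ≠ 0`, then `|τ x| < 1`: otherwise `|f x| ≤ ‖f τ^k‖_∞` for every `k`,
although these are the terms of a convergent series. Hence the compact set `{c ≤ |f|}` lies in
`{|τ| < ε}` for some `ε < 1`, and multiplying `f` by an Urysohn cutoff that is `1` there and
compactly supported in `{|τ| < ε}` gives `g` with `|f - g| ≤ min |f| c`. As `c → 0`,
`‖(f - g) τ^k‖_∞ ≤ c ‖τ‖_∞^k → 0` for each `k`, dominated by `‖f τ^k‖_∞`, so `‖f - g‖_τ → 0`
by dominated convergence for series.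
-/

open Filter

open Topology Set

lemma abs_mul_pow_le {a b B C : ℝ} (ha : |a| ≤ B) (hb : |b| ≤ C) (k : ℕ) :
    |a * b ^ k| ≤ B * C ^ k := by
  rw [abs_mul, abs_pow]
  exact mul_le_mul ha (pow_le_pow_left₀ (abs_nonneg b) hb k) (by positivity)
    ((abs_nonneg a).trans ha)

lemma isCompact_setOf_le_abs {X : Type*} [TopologicalSpace X] {f : X → ℝ} (hf : Continuous f)
    (hf0 : Tendsto f (cocompact X) (𝓝 0)) {c : ℝ} (hc : 0 < c) :
    IsCompact {x | c ≤ |f x|} := by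
  obtain ⟨t, ht, hft⟩ := mem_cocompact.mp (hf0 (Metric.ball_mem_nhds 0 hc))
  refine ht.of_isClosed_subset (isClosed_le continuous_const hf.abs) fun x hx => ?_
  by_contra hxt
  have hlt : |f x| < c := by simpa [Real.dist_eq] using hft hxt
  exact hlt.not_ge hx

lemma IsCompact.exists_forall_lt_of_forall_lt {X : Type*} [TopologicalSpace X] {K : Set X}
    (hK : IsCompact K) {u : X → ℝ} (hu : ContinuousOn u K) {m a : ℝ} (hma : m < a)
    (h : ∀ x ∈ K, u x < a) : ∃ b, m < b ∧ b < a ∧ ∀ x ∈ K, u x < b := by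
  rcases K.eq_empty_or_nonempty with rfl | hne
  · exact ⟨(m + a) / 2, by linarith, by linarith, by simp⟩
  obtain ⟨x₀, hx₀, hmax⟩ := hK.exists_isMaxOn hne hu
  have hx₀a : max m (u x₀) < a := max_lt hma (h x₀ hx₀)
  refine ⟨(max m (u x₀) + a) / 2, by linarith [le_max_left m (u x₀)], by linarith,
    fun x hx => ?_⟩
  have hux : u x ≤ u x₀ := hmax hx
  linarith [le_max_right m (u x₀)]

section

variable {τ f g : ℝ → ℝ}

lemma bddAbove_range_abs_mul_pow {B C : ℝ} (hf : ∀ x, |f x| ≤ B) (hτ : ∀ x, |τ x| ≤ C)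
    (k : ℕ) : BddAbove (range fun x => |f x * τ x ^ k|) :=
  ⟨B * C ^ k, forall_mem_range.2 fun x => abs_mul_pow_le (hf x) (hτ x) k⟩

lemma ciSup_abs_mul_pow_mono {B C : ℝ} (hf : ∀ x, |f x| ≤ B) (hτ : ∀ x, |τ x| ≤ C)
    (hgf : ∀ x, |g x| ≤ |f x|) (k : ℕ) :
    ⨆ x, |g x * τ x ^ k| ≤ ⨆ x, |f x * τ x ^ k| :=
  ciSup_mono (bddAbove_range_abs_mul_pow hf hτ k) fun x => by
    simpa only [abs_mul] using mul_le_mul_of_nonneg_right (hgf x) (abs_nonneg (τ x ^ k))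

namespace MemSegal

lemma exists_abs_le (hf : MemSegal τ f) : ∃ B, ∀ x, |f x| ≤ B := by
  let F : ZeroAtInftyContinuousMap ℝ ℝ := ⟨⟨f, hf.1⟩, hf.2.1⟩
  exact ⟨‖F.toBCF‖, F.toBCF.norm_coe_le_norm⟩

lemma abs_lt_one (hf : MemSegal τ f) (hτ : ∃ C, ∀ x, |τ x| ≤ C) {x : ℝ} (hx : f x ≠ 0) :
    |τ x| < 1 := by
  obtain ⟨B, hB⟩ := hf.exists_abs_le
  obtain ⟨C, hC⟩ := hτ
  by_contra! h1
  have hle (k : ℕ) : |f x| ≤ ⨆ y, |f y * τ y ^ k| :=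
    calc |f x| ≤ |f x| * |τ x| ^ k := le_mul_of_one_le_right (abs_nonneg _) (one_le_pow₀ h1)
      _ = |f x * τ x ^ k| := by rw [abs_mul, abs_pow]
      _ ≤ _ := le_ciSup (bddAbove_range_abs_mul_pow hB hC k) x
  exact hx (abs_nonpos_iff.mp (ge_of_tendsto' hf.2.2.tendsto_atTop_zero hle))

lemma of_abs_le (hf : MemSegal τ f) (hτ : ∃ C, ∀ x, |τ x| ≤ C) (hg : Continuous g)
    (hgf : ∀ x, |g x| ≤ |f x|) : MemSegal τ g := by
  obtain ⟨B, hB⟩ := hf.exists_abs_le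
  obtain ⟨C, hC⟩ := hτ
  refine ⟨hg, squeeze_zero_norm hgf (by simpa using hf.2.1.abs), ?_⟩
  exact hf.2.2.of_nonneg_of_le (fun k => Real.iSup_nonneg fun x => abs_nonneg _)
    (ciSup_abs_mul_pow_mono hB hC hgf)

lemma tendsto_segalNorm_zero {ι : Type*} {l : Filter ι} (hf : MemSegal τ f)
    (hτ : ∃ C, ∀ x, |τ x| ≤ C) {h : ι → ℝ → ℝ} {c : ι → ℝ} (hc : Tendsto c l (𝓝 0))
    (hhf : ∀ i x, |h i x| ≤ |f x|) (hhc : ∀ i x, |h i x| ≤ c i) :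
    Tendsto (fun i => segalNorm τ (h i)) l (𝓝 0) := by
  obtain ⟨B, hB⟩ := hf.exists_abs_le
  obtain ⟨C, hC⟩ := hτ
  have hsup_nonneg (i : ι) (k : ℕ) : 0 ≤ ⨆ x, |h i x * τ x ^ k| :=
    Real.iSup_nonneg fun x => abs_nonneg _
  have hterm (k : ℕ) : Tendsto (fun i => ⨆ x, |h i x * τ x ^ k|) l (𝓝 0) :=
    squeeze_zero (hsup_nonneg · k)
      (fun i => ciSup_le fun x => abs_mul_pow_le (hhc i x) (hC x) k)
      (by simpa using hc.mul_const (C ^ k))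
  simpa only [segalNorm, tsum_zero] using tendsto_tsum_of_dominated_convergence hf.2.2 hterm
    (Eventually.of_forall fun i k => by
      rw [Real.norm_of_nonneg (hsup_nonneg i k)]
      exact ciSup_abs_mul_pow_mono hB hC (hhf i) k)

lemma exists_hasCompactSupport_abs_sub_le (hf : MemSegal τ f) (hτc : Continuous τ)
    (hτb : ∃ C, ∀ x, |τ x| ≤ C) {c : ℝ} (hc : 0 < c) :
    ∃ g : ℝ → ℝ, MemSegal τ g ∧ HasCompactSupport g ∧
      (∃ ε : ℝ, 0 < ε ∧ ε < 1 ∧ tsupport g ⊆ {x : ℝ | |τ x| ≤ ε}) ∧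
      ∀ x, |f x - g x| ≤ |f x| ∧ |f x - g x| ≤ c := by
  have hK : IsCompact {x | c ≤ |f x|} := isCompact_setOf_le_abs hf.1 hf.2.1 hc
  obtain ⟨ε, hε0, hε1, hKε⟩ := hK.exists_forall_lt_of_forall_lt hτc.abs.continuousOn
    zero_lt_one fun x hx => hf.abs_lt_one hτb fun h0 =>
      hc.not_ge (by simpa [h0] using hx)
  obtain ⟨φ, hφK, hφc, hφε, hφ01⟩ := exists_continuousMap_one_of_isCompact_subset_isOpen hK
    (isOpen_lt hτc.abs continuous_const) hKε
  have hdiff (x : ℝ) : |f x - f x * φ x| = |f x| * (1 - φ x) := by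
    rw [← mul_one_sub, abs_mul, abs_of_nonneg (sub_nonneg.2 (hφ01 x).2)]
  refine ⟨fun x => f x * φ x, hf.of_abs_le hτb (hf.1.mul φ.continuous) fun x => ?_,
    HasCompactSupport.mul_left (f := f) hφc, ⟨ε, hε0, hε1, tsupport_mul_subset_right.trans fun x hx => le_of_lt (show |τ x| < ε from hφε hx)⟩,
    fun x => ⟨?_, ?_⟩⟩
  · rw [abs_mul]
    exact mul_le_of_le_one_right (abs_nonneg _) (abs_le.2 ⟨by linarith [(hφ01 x).1], (hφ01 x).2⟩)
  · rw [hdiff]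
    exact mul_le_of_le_one_right (abs_nonneg _) (by linarith [(hφ01 x).1])
  · rw [hdiff]
    by_cases hx : c ≤ |f x|
    · rw [hφK hx, Pi.one_apply, sub_self, mul_zero]
      exact hc.le
    · exact (mul_le_of_le_one_right (abs_nonneg _) (by linarith [(hφ01 x).1])).trans
        (not_le.1 hx).le

end MemSegal

end

/-- The set of compactly supported members of `𝒜_τ` whose support is
contained in `{x : |τ x| ≤ ε}` for some `ε ∈ (0,1)` is dense in `𝒜_τ` for `‖·‖_τ`. -/
theorem segal_compactly_supported_dense (τ : ℝ → ℝ)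
    (hτc : Continuous τ) (hτb : ∃ C, ∀ x, |τ x| ≤ C) :
    ∀ f : ℝ → ℝ, MemSegal τ f → ∀ δ : ℝ, 0 < δ →
      ∃ g : ℝ → ℝ, MemSegal τ g ∧ HasCompactSupport g ∧
        (∃ ε : ℝ, 0 < ε ∧ ε < 1 ∧ tsupport g ⊆ {x : ℝ | |τ x| ≤ ε}) ∧
        segalNorm τ (fun x => f x - g x) < δ := by
  intro f hf δ hδ
  choose g hgS hgc hgε hgf using fun n : ℕ =>
    hf.exists_hasCompactSupport_abs_sub_le hτc hτb (Nat.one_div_pos_of_nat (n := n))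
  have hlim := hf.tendsto_segalNorm_zero hτb tendsto_one_div_add_atTop_nhds_zero_nat
    (h := fun n x => f x - g n x) (fun n x => (hgf n x).1) (fun n x => (hgf n x).2)
  obtain ⟨n, hn⟩ := (hlim.eventually (gt_mem_nhds hδ)).exists
  exact ⟨g n, hgS n, hgc n, hgε n, hn⟩
end

section
/- Let X be a locally compact Hausdorff space, α a homeomorphism of X, and w a bounded continuous function on X. Suppose that: (i) for every compact K ⊆ X there exists N such that α^n(K) ∩ K = ∅ for all n ≥ N; (ii) for every compact K ⊆ X, lim_{n→∞} sup_{t∈K} ∏_{j=0}^{n-1} |w(α^{j-n}(t))| = 0 and lim_{n→∞} sup_{t∈K} ∏_{j=0}^{n-1} |w(α^j(t))|^{-1} = 0, where w > 0 and sup‖w‖_∞ + sup‖w^{-1}‖_∞ < ∞. Then the operator U_{α,w}(f) := w·(f∘α) is topologically mixing on C₀(X). -/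
/-!
Kitai's criterion. Write `T F = w · (F ∘ α)` and `S F = (F / w) ∘ α⁻¹`, so that `T ∘ S = id`.
For compactly supported `f, g` we have `Tⁿ (f + Sⁿ g) = Tⁿ f + g`, and the two decay conditions
are precisely the sup-norm bounds giving `Tⁿ f → 0` and `Sⁿ g → 0`. Choosing compactly supported
`f ∈ U` and `g ∈ V` (they are dense in `C₀(X)`), for large `n` the point `f + Sⁿ g` lies in `U`
and its image `Tⁿ f + g` lies in `V`.
-/

open Filter Topology Finset ZeroAtInfty

theorem Dense.eventually_exists_mem_of_tendsto {E : Type*} [TopologicalSpace E] {D : Set E}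
    (hD : Dense D) {R : ℕ → E → E → Prop}
    (h : ∀ f ∈ D, ∀ g ∈ D, ∃ a b : ℕ → E, Tendsto a atTop (𝓝 f) ∧ Tendsto b atTop (𝓝 g) ∧
      ∀ n, R n (a n) (b n))
    {U V : Set E} (hU : IsOpen U) (hV : IsOpen V) (hUne : U.Nonempty) (hVne : V.Nonempty) :
    ∀ᶠ n in atTop, ∃ f ∈ U, ∃ g ∈ V, R n f g := by
  obtain ⟨f, hfU, hfD⟩ := hD.inter_open_nonempty U hU hUne
  obtain ⟨g, hgV, hgD⟩ := hD.inter_open_nonempty V hV hVne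
  obtain ⟨a, b, ha, hb, hR⟩ := h f hfD g hgD
  filter_upwards [ha.eventually_mem (hU.mem_nhds hfU), hb.eventually_mem (hV.mem_nhds hgV)]
    with n han hbn
  exact ⟨a n, han, b n, hbn, hR n⟩

theorem IsCompact.le_biSup_of_continuousOn {X : Type*} [TopologicalSpace X] {K : Set X}
    (hK : IsCompact K) {F : X → ℝ} (hF : ContinuousOn F K) {t : X} (ht : t ∈ K) :
    F t ≤ ⨆ s ∈ K, F s :=
  le_ciSup₂ (f := fun s (_ : s ∈ K) => F s) ((hK.image_of_continuousOn hF).bddAbove.mono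
    (by rintro _ ⟨_, ⟨s, rfl⟩, ⟨hs, rfl⟩⟩; exact ⟨s, hs, rfl⟩)) t ht

namespace Homeomorph

variable {X : Type*} [TopologicalSpace X]

def toPermHom : (X ≃ₜ X) →* Equiv.Perm X where
  toFun := toEquiv
  map_one' := rfl
  map_mul' _ _ := rfl

theorem toEquiv_zpow_apply (α : X ≃ₜ X) (k : ℤ) (x : X) : (α.toEquiv ^ k) x = (α ^ k) x := by
  change (toPermHom α ^ k) x = _
  rw [← map_zpow]
  rfl

theorem toEquiv_pow_apply (α : X ≃ₜ X) (n : ℕ) (x : X) : (α.toEquiv ^ n) x = (α ^ n) x := by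
  simpa only [zpow_natCast] using toEquiv_zpow_apply α n x

end Homeomorph

section WeightedComposition

variable {X M : Type*} [TopologicalSpace X] (α : X ≃ₜ X)

def weightedComp [Mul M] (w F : X → M) : X → M := fun y => w y * F (α y)

def weightedCompInv [Div M] (w F : X → M) : X → M := fun y => F (α.symm y) / w (α.symm y)

def weightProd [CommMonoid M] (w : X → M) (n : ℕ) (x : X) : M := ∏ j ∈ range n, w ((α ^ j) x)

theorem weightProd_succ [CommMonoid M] (w : X → M) (n : ℕ) (x : X) :
    weightProd α w (n + 1) x = w x * weightProd α w n (α x) := by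
  simp only [weightProd, prod_range_succ', pow_succ, Homeomorph.mul_apply, pow_zero,
    Homeomorph.one_apply]
  exact mul_comm _ _

theorem weightedComp_iterate_apply [CommMonoid M] (w F : X → M) (n : ℕ) (x : X) :
    (weightedComp α w)^[n] F x = weightProd α w n x * F ((α ^ n) x) := by
  induction n generalizing x with
  | zero => simp [weightProd]
  | succ n ih =>
    rw [Function.iterate_succ_apply', weightedComp, ih, weightProd_succ, pow_succ,
      Homeomorph.mul_apply, mul_assoc]

theorem weightedComp_iterate_add [CommSemiring M] (w F G : X → M) (n : ℕ) :
    (weightedComp α w)^[n] (F + G) = (weightedComp α w)^[n] F + (weightedComp α w)^[n] G :=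
  funext fun x => by simp only [Pi.add_apply, weightedComp_iterate_apply, mul_add]

theorem weightedComp_weightedCompInv [Field M] {w : X → M} (hw : ∀ x, w x ≠ 0) :
    Function.LeftInverse (weightedComp α w) (weightedCompInv α w) := fun F => funext fun y => by
  simp [weightedComp, weightedCompInv, mul_div_cancel₀ _ (hw y)]

theorem weightedCompInv_iterate_apply [Field M] {w : X → M} (hw : ∀ x, w x ≠ 0) (n : ℕ)
    (F : X → M) (x : X) :
    (weightedCompInv α w)^[n] F x = F ((α ^ n)⁻¹ x) / weightProd α w n ((α ^ n)⁻¹ x) := by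
  have := weightedComp_iterate_apply α w ((weightedCompInv α w)^[n] F) n ((α ^ n)⁻¹ x)
  rw [((weightedComp_weightedCompInv α hw).iterate n) F,
    show (α ^ n) ((α ^ n)⁻¹ x) = x from (α ^ n).apply_symm_apply x] at this
  exact eq_div_of_mul_eq (prod_ne_zero_iff.2 fun j _ => hw _) (by rw [mul_comm, this])

theorem weightProd_inv_pow_apply [CommMonoid M] (w : X → M) (n : ℕ) (t : X) :
    weightProd α w n ((α ^ n)⁻¹ t) = ∏ j ∈ range n, w ((α.toEquiv ^ ((j : ℤ) - n)) t) := by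
  refine prod_congr rfl fun j _ => ?_
  rw [Homeomorph.toEquiv_zpow_apply, zpow_sub, zpow_natCast, zpow_natCast, Homeomorph.mul_apply]

end WeightedComposition

namespace ZeroAtInftyContinuousMap

variable {X : Type*} [TopologicalSpace X]

def ofHasCompactSupport (f : C(X, ℝ)) (hf : HasCompactSupport f) : C₀(X, ℝ) :=
  ⟨f, hf.is_zero_at_infty⟩

@[simp]
theorem coe_ofHasCompactSupport (f : C(X, ℝ)) (hf : HasCompactSupport f) :
    ⇑(ofHasCompactSupport f hf) = f := rfl

theorem abs_apply_le_norm (f : C₀(X, ℝ)) (x : X) : |f x| ≤ ‖f‖ :=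
  f.toBCF.norm_coe_le_norm x

theorem norm_le_of_forall_abs_le (f : C₀(X, ℝ)) {C : ℝ} (hC : 0 ≤ C) (h : ∀ x, |f x| ≤ C) :
    ‖f‖ ≤ C :=
  (BoundedContinuousFunction.norm_le hC).2 h

theorem tendsto_zero_of_forall_abs_le {ι : Type*} {l : Filter ι} {F : ι → C₀(X, ℝ)} {b : ι → ℝ}
    (hb : Tendsto b l (𝓝 0)) (h : ∀ i x, |F i x| ≤ b i) : Tendsto F l (𝓝 0) :=
  squeeze_zero_norm (fun i => norm_le_of_forall_abs_le _ (abs_nonneg _)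
    fun x => (h i x).trans (le_abs_self _)) (by simpa using hb.abs)

theorem exists_hasCompactSupport_dist_lt [RegularSpace X] [LocallyCompactSpace X]
    (u : C₀(X, ℝ)) {ε : ℝ} (hε : 0 < ε) : ∃ f : C₀(X, ℝ), HasCompactSupport f ∧ dist f u < ε := by
  set K := (u ⁻¹' Metric.ball 0 (ε / 2))ᶜ
  have hK : IsCompact K := by
    obtain ⟨L, hL, hKL⟩ := mem_cocompact'.1 (zero_at_infty u (Metric.ball_mem_nhds 0 (half_pos hε)))
    exact hL.of_isClosed_subset (Metric.isOpen_ball.preimage u.continuous).isClosed_compl hKL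
  obtain ⟨φ, hφK, -, hφ, hφ01⟩ :=
    exists_continuous_one_zero_of_isCompact hK isClosed_empty (Set.disjoint_empty K)
  have hcs : HasCompactSupport (φ * u.toContinuousMap) := hφ.mul_right
  refine ⟨ofHasCompactSupport _ hcs, hcs, ?_⟩
  refine (dist_eq_norm _ _).trans_lt <| (norm_le_of_forall_abs_le _ (half_pos hε).le
    fun x => ?_).trans_lt (half_lt_self hε)
  have hφu : (ofHasCompactSupport _ hcs - u) x = (φ x - 1) * u x := by
    simp only [coe_sub, coe_ofHasCompactSupport, Pi.sub_apply, ContinuousMap.mul_apply,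
      coe_toContinuousMap]
    ring
  rw [hφu, abs_mul]
  by_cases hx : x ∈ K
  · simpa [hφK hx] using (half_pos hε).le
  · have hux : |u x| < ε / 2 := by simpa [K] using hx
    obtain ⟨hφ0, hφ1⟩ := hφ01 x
    have hφ1' : |φ x - 1| ≤ 1 := abs_le.2 ⟨by linarith, by linarith⟩
    nlinarith [abs_nonneg (φ x - 1), abs_nonneg (u x)]

theorem dense_setOf_hasCompactSupport [RegularSpace X] [LocallyCompactSpace X] :
    Dense {f : C₀(X, ℝ) | HasCompactSupport f} :=
  Metric.dense_iff.2 fun u _ hε =>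
    let ⟨f, hf, hfu⟩ := exists_hasCompactSupport_dist_lt u hε
    ⟨f, hfu, hf⟩

theorem abs_mul_apply_le_biSup_mul_norm {G : X → ℝ} (hG : Continuous G) (f : C₀(X, ℝ))
    (hf : HasCompactSupport f) (y : X) :
    |G y * f y| ≤ (⨆ t ∈ tsupport f, |G t|) * ‖f‖ := by
  have hsup : 0 ≤ ⨆ t ∈ tsupport f, |G t| :=
    Real.iSup_nonneg fun _ => Real.iSup_nonneg fun _ => abs_nonneg _
  by_cases hy : y ∈ tsupport f
  · rw [abs_mul]
    exact mul_le_mul (hf.le_biSup_of_continuousOn hG.abs.continuousOn hy)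
      (abs_apply_le_norm f y) (abs_nonneg _) hsup
  · rw [image_eq_zero_of_notMem_tsupport hy, mul_zero, abs_zero]
    exact mul_nonneg hsup (norm_nonneg f)

end ZeroAtInftyContinuousMap

section WeightedCompositionC0

variable {X : Type*} [TopologicalSpace X] (α : X ≃ₜ X) {w : X → ℝ}

theorem continuous_weightProd (hw : Continuous w) (n : ℕ) : Continuous (weightProd α w n) :=
  continuous_finsetProd _ fun j _ => hw.comp (α ^ j).continuous

theorem continuous_weightedComp_iterate (hw : Continuous w) {F : X → ℝ} (hF : Continuous F)
    (n : ℕ) : Continuous ((weightedComp α w)^[n] F) :=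
  Function.Iterate.rec (fun G => Continuous G) hF (fun _ hG => hw.mul (hG.comp α.continuous)) n

theorem hasCompactSupport_weightedComp_iterate {F : X → ℝ} (hF : HasCompactSupport F) (n : ℕ) :
    HasCompactSupport ((weightedComp α w)^[n] F) :=
  Function.Iterate.rec (fun G => HasCompactSupport G) hF
    (fun _ hG => (hG.comp_homeomorph α).mul_left) n

theorem continuous_weightedCompInv_iterate (hw : Continuous w) (hw0 : ∀ x, w x ≠ 0)
    {F : X → ℝ} (hF : Continuous F) (n : ℕ) : Continuous ((weightedCompInv α w)^[n] F) :=
  Function.Iterate.rec (fun G => Continuous G) hF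
    (fun _ hG => (hG.comp α.symm.continuous).div (hw.comp α.symm.continuous) fun _ => hw0 _) n

theorem hasCompactSupport_weightedCompInv_iterate {F : X → ℝ} (hF : HasCompactSupport F)
    (n : ℕ) : HasCompactSupport ((weightedCompInv α w)^[n] F) :=
  Function.Iterate.rec (fun G => HasCompactSupport G) hF
    (fun _ hG => (hG.comp_homeomorph α.symm).mono fun _ hx => (div_ne_zero_iff.1 hx).1) n

open ZeroAtInftyContinuousMap in
theorem exists_tendsto_weightedComp_iterate_eq (hw : Continuous w) (hw0 : ∀ x, w x ≠ 0)
    {f g : C₀(X, ℝ)} (hf : HasCompactSupport f) (hg : HasCompactSupport g)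
    (hf_decay :
      Tendsto (fun n => ⨆ t ∈ tsupport f, |weightProd α w n ((α ^ n)⁻¹ t)|) atTop (𝓝 0))
    (hg_decay : Tendsto (fun n => ⨆ t ∈ tsupport g, |(weightProd α w n t)⁻¹|) atTop (𝓝 0)) :
    ∃ a b : ℕ → C₀(X, ℝ), Tendsto a atTop (𝓝 f) ∧ Tendsto b atTop (𝓝 g) ∧
      ∀ n x, b n x = (weightedComp α w)^[n] (a n) x := by
  let T n : C₀(X, ℝ) := ofHasCompactSupport
    ⟨_, continuous_weightedComp_iterate α hw f.continuous n⟩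
    (hasCompactSupport_weightedComp_iterate α hf n)
  let S n : C₀(X, ℝ) := ofHasCompactSupport
    ⟨_, continuous_weightedCompInv_iterate α hw hw0 g.continuous n⟩
    (hasCompactSupport_weightedCompInv_iterate α hg n)
  have hT : Tendsto T atTop (𝓝 0) := by
    refine tendsto_zero_of_forall_abs_le (by simpa using hf_decay.mul_const ‖f‖) fun n x => ?_
    have := abs_mul_apply_le_biSup_mul_norm
      ((continuous_weightProd α hw n).comp (α ^ n)⁻¹.continuous) f hf ((α ^ n) x)
    simpa [T, weightedComp_iterate_apply] using this
  have hS : Tendsto S atTop (𝓝 0) := by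
    refine tendsto_zero_of_forall_abs_le (by simpa using hg_decay.mul_const ‖g‖) fun n x => ?_
    have := abs_mul_apply_le_biSup_mul_norm
      ((continuous_weightProd α hw n).inv₀ fun _ => prod_ne_zero_iff.2 fun _ _ => hw0 _) g hg
      ((α ^ n)⁻¹ x)
    simpa [S, weightedCompInv_iterate_apply α hw0, div_eq_inv_mul] using this
  refine ⟨fun n => f + S n, fun n => T n + g, by simpa using tendsto_const_nhds.add hS,
    by simpa using hT.add tendsto_const_nhds, fun n x => ?_⟩
  simp [T, S, weightedComp_iterate_add, ((weightedComp_weightedCompInv α hw0).iterate n) g]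

end WeightedCompositionC0

theorem weighted_composition_mixing_general
    {X : Type*} [TopologicalSpace X] [LocallyCompactSpace X] [T2Space X]
    (α : X ≃ₜ X) (w : X → ℝ)
    (hwc : Continuous w) (hwpos : ∀ x, 0 < w x)
    (hdecay : ∀ K : Set X, IsCompact K →
      Tendsto (fun n : ℕ =>
          ⨆ t ∈ K, ∏ j ∈ Finset.range n, |w ((α.toEquiv ^ ((j : ℤ) - (n : ℤ))) t)|)
        atTop (nhds 0) ∧
      Tendsto (fun n : ℕ =>
          ⨆ t ∈ K, ∏ j ∈ Finset.range n, |w ((α.toEquiv ^ (j : ℤ)) t)|⁻¹)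
        atTop (nhds 0)) :
    ∀ U V : Set C₀(X, ℝ), IsOpen U → IsOpen V → U.Nonempty → V.Nonempty →
      ∃ N : ℕ, ∀ n ≥ N, ∃ f ∈ U, ∃ g : C₀(X, ℝ), g ∈ V ∧
        ∀ x : X, g x = (fun F : X → ℝ => fun y => w y * F (α y))^[n] (⇑f) x := by
  intro U V hU hV hUne hVne
  refine eventually_atTop.1 <| ZeroAtInftyContinuousMap.dense_setOf_hasCompactSupport
    |>.eventually_exists_mem_of_tendsto (fun f hf g hg => ?_) hU hV hUne hVne
  refine exists_tendsto_weightedComp_iterate_eq α hwc (fun x => (hwpos x).ne') hf hg ?_ ?_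
  · simpa only [weightProd_inv_pow_apply, abs_prod] using (hdecay _ hf).1
  · simpa only [weightProd, abs_inv, abs_prod, prod_inv_distrib, zpow_natCast,
      Homeomorph.toEquiv_pow_apply] using (hdecay _ hg).2

/-- Under the stated run-away and weight-product decay conditions,
the weighted composition operator `U_{α,w}(f) = w·(f∘α)` is topologically mixing
on `C₀(X)`. -/
theorem weighted_composition_mixing
    {X : Type*} [TopologicalSpace X] [LocallyCompactSpace X] [T2Space X]
    (α : X ≃ₜ X) (w : X → ℝ)
    (hwc : Continuous w) (hwpos : ∀ x, 0 < w x)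
    (hwb : ∃ C : ℝ, (⨆ x : X, |w x|) + (⨆ x : X, |w x|⁻¹) ≤ C)
    (hrunaway : ∀ K : Set X, IsCompact K →
      ∃ N : ℕ, ∀ n ≥ N, ((⇑α)^[n] '' K) ∩ K = ∅)
    (hdecay : ∀ K : Set X, IsCompact K →
      Tendsto (fun n : ℕ =>
          ⨆ t ∈ K, ∏ j ∈ Finset.range n, |w ((α.toEquiv ^ ((j : ℤ) - (n : ℤ))) t)|)
        atTop (nhds 0) ∧
      Tendsto (fun n : ℕ =>
          ⨆ t ∈ K, ∏ j ∈ Finset.range n, |w ((α.toEquiv ^ (j : ℤ)) t)|⁻¹)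
        atTop (nhds 0)) :
    ∀ U V : Set C₀(X, ℝ), IsOpen U → IsOpen V → U.Nonempty → V.Nonempty →
      ∃ N : ℕ, ∀ n ≥ N, ∃ f ∈ U, ∃ g : C₀(X, ℝ), g ∈ V ∧
        ∀ x : X, g x = (fun F : X → ℝ => fun y => w y * F (α y))^[n] (⇑f) x :=
  weighted_composition_mixing_general α w hwc hwpos hdecay
end

section
/- Let τ ∈ C_b(ℝ) with τ ∘ α = τ, let w ∈ C_b(ℝ), let f ∈ 𝒜_τ have compact support contained in K := supp f ⊆ {x : |τ(x)| ≤ ε} for some ε ∈ (0,1), and let T_{α,w}(f) := w·(f∘α). Then for every n ∈ ℕ, ‖T_{α,w}^n(f)‖_τ ≤ (sup_{t∈K} ∏_{j=0}^{n−1} |w(α^{j−n}(t))|) · ‖f‖_τ. -/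
/-!
Unfolding the iterate, `T^n f (x) = (∏_{j<n} w (α^j x)) · f (α^n x)`. Put `s = α^n x`;
since `τ` is `α`-invariant, `|T^n f (x) · τ(x)^k| = Q(s) · |f(s) · τ(s)^k|` with
`Q(s) = ∏_{j<n} |w (α^{j-n} s)|`. This vanishes unless `s ∈ supp f`, where `Q(s)` is at most
the supremum in the bound; taking the supremum over `x` and summing over `k` gives the
estimate term by term.
-/

open Filter

open Function

theorem iterate_weightedComp_apply {X R : Type*} [CommMonoid R] (α : X → X) (w : X → R)
    (n : ℕ) (f : X → R) (x : X) :
    (fun F : X → R => fun y => w y * F (α y))^[n] f x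
      = (∏ j ∈ Finset.range n, w (α^[j] x)) * f (α^[n] x) := by
  induction n generalizing f with
  | zero => simp
  | succ n ih =>
    rw [iterate_succ_apply, ih, Finset.prod_range_succ, iterate_succ_apply']
    ac_rfl

theorem Equiv.Perm.zpow_natCast_sub_apply_iterate {X : Type*} (σ : Equiv.Perm X) (j n : ℕ)
    (x : X) : (σ ^ ((j : ℤ) - n)) ((⇑σ)^[n] x) = (⇑σ)^[j] x := by
  rw [Equiv.Perm.iterate_eq_pow, Equiv.Perm.iterate_eq_pow, ← zpow_natCast,
    ← Equiv.Perm.mul_apply, ← zpow_add, sub_add_cancel, zpow_natCast]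

theorem iterate_apply_eq_of_comp_eq {X Y : Type*} {α : X → X} {τ : X → Y}
    (h : ∀ x, τ (α x) = τ x) (n : ℕ) (x : X) : τ (α^[n] x) = τ x := by
  induction n with
  | zero => rfl
  | succ n ih => rw [iterate_succ_apply', h, ih]

theorem segalNorm_le_mul_of_abs_mul_pow_le {τ f g : ℝ → ℝ} {C : ℝ}
    (hf : Summable fun k : ℕ => ⨆ x, |f x * τ x ^ k|)
    (hg : ∀ k x, |g x * τ x ^ k| ≤ C * ⨆ y, |f y * τ y ^ k|) :
    segalNorm τ g ≤ C * segalNorm τ f := by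
  have hle : ∀ k : ℕ, ⨆ x, |g x * τ x ^ k| ≤ C * ⨆ y, |f y * τ y ^ k| :=
    fun k => ciSup_le (hg k)
  have hg_sum : Summable fun k : ℕ => ⨆ x, |g x * τ x ^ k| :=
    (hf.mul_left C).of_nonneg_of_le (fun k => Real.iSup_nonneg fun x => abs_nonneg _) hle
  rw [segalNorm, segalNorm, ← tsum_mul_left]
  exact hg_sum.tsum_le_tsum hle (hf.mul_left C)

theorem abs_mul_pow_le_iSup {τ f : ℝ → ℝ} (hτ : Continuous τ) (hf : Continuous f)
    (hfc : HasCompactSupport f) (k : ℕ) (y : ℝ) :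
    |f y * τ y ^ k| ≤ ⨆ x, |f x * τ x ^ k| :=
  le_ciSup ((hf.mul (hτ.pow k)).abs.bddAbove_range_of_hasCompactSupport
    (hfc.mul_right).abs) y

theorem mul_abs_le_biSup_tsupport_mul {X : Type*} [TopologicalSpace X] {φ f : X → ℝ}
    (hφ : BddAbove (Set.range φ)) (y : X) (a : ℝ) :
    φ y * |f y * a| ≤ (⨆ t ∈ tsupport f, φ t) * |f y * a| := by
  by_cases hy : f y = 0
  · simp [hy]
  have hbdd : BddAbove (⋃ t, Set.range fun _ : t ∈ tsupport f => φ t) :=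
    hφ.mono (Set.iUnion_subset fun t => Set.range_subset_iff.2 fun _ => Set.mem_range_self t)
  exact mul_le_mul_of_nonneg_right (le_ciSup₂ hbdd y (subset_tsupport f hy)) (abs_nonneg _)

theorem weighted_composition_iterate_norm_bound_general (α : ℝ ≃ₜ ℝ) (τ w : ℝ → ℝ)
    (hτc : Continuous τ)
    (hinv : ∀ x, τ (α x) = τ x)
    (hwb : ∃ C, ∀ x, |w x| ≤ C)
    (f : ℝ → ℝ) (hf : MemSegal τ f) (hfc : HasCompactSupport f) :
    ∀ n : ℕ,
      segalNorm τ ((fun F : ℝ → ℝ => fun y => w y * F (α y))^[n] f) ≤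
        (⨆ t ∈ tsupport f,
            ∏ j ∈ Finset.range n, |w ((α.toEquiv ^ ((j : ℤ) - (n : ℤ))) t)|) *
          segalNorm τ f := by
  intro n
  obtain ⟨Cw, hCw⟩ := hwb
  set Q : ℝ → ℝ := fun t => ∏ j ∈ Finset.range n, |w ((α.toEquiv ^ ((j : ℤ) - (n : ℤ))) t)|
  -- `⨆` of an unbounded real family is `0`, so `Q s ≤ ⨆ t ∈ tsupport f, Q t` needs `w` bounded.
  have hQ_bdd : BddAbove (Set.range Q) :=
    ⟨Cw ^ n, Set.forall_mem_range.2 fun t =>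
      (Finset.prod_le_prod (fun _ _ => abs_nonneg _) fun _ _ => hCw _).trans_eq (by simp)⟩
  have hC0 : 0 ≤ ⨆ t ∈ tsupport f, Q t :=
    Real.iSup_nonneg fun _ => Real.iSup_nonneg fun _ => Finset.prod_nonneg fun _ _ => abs_nonneg _
  refine segalNorm_le_mul_of_abs_mul_pow_le hf.2.2 fun k x => ?_
  have hQ : Q (α^[n] x) = |∏ j ∈ Finset.range n, w (α^[j] x)| := by
    simp only [Q, Finset.abs_prod, ← Homeomorph.coe_toEquiv,
      Equiv.Perm.zpow_natCast_sub_apply_iterate]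
  rw [iterate_weightedComp_apply, mul_assoc, abs_mul, ← hQ,
    ← iterate_apply_eq_of_comp_eq hinv n x]
  calc Q (α^[n] x) * |f (α^[n] x) * τ (α^[n] x) ^ k|
      ≤ (⨆ t ∈ tsupport f, Q t) * |f (α^[n] x) * τ (α^[n] x) ^ k| :=
        mul_abs_le_biSup_tsupport_mul hQ_bdd _ _
    _ ≤ (⨆ t ∈ tsupport f, Q t) * ⨆ y, |f y * τ y ^ k| :=
        mul_le_mul_of_nonneg_left (abs_mul_pow_le_iSup hτc hf.1 hfc k _) hC0

/-- If `τ ∘ α = τ`, `f ∈ 𝒜_τ` has compact support `K ⊆ {|τ| ≤ ε}` for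
some `ε ∈ (0,1)`, then for every `n`,
`‖T_{α,w}^n(f)‖_τ ≤ (sup_{t∈K} ∏_{j=0}^{n−1} |w(α^{j−n}(t))|)·‖f‖_τ`. -/
theorem weighted_composition_iterate_norm_bound (α : ℝ ≃ₜ ℝ) (τ w : ℝ → ℝ)
    (hτc : Continuous τ) (hτb : ∃ C, ∀ x, |τ x| ≤ C)
    (hinv : ∀ x, τ (α x) = τ x)
    (hwc : Continuous w) (hwb : ∃ C, ∀ x, |w x| ≤ C)
    (f : ℝ → ℝ) (hf : MemSegal τ f) (hfc : HasCompactSupport f)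
    (ε : ℝ) (hε0 : 0 < ε) (hε1 : ε < 1)
    (hsupp : tsupport f ⊆ {x : ℝ | |τ x| ≤ ε}) :
    ∀ n : ℕ,
      segalNorm τ ((fun F : ℝ → ℝ => fun y => w y * F (α y))^[n] f) ≤
        (⨆ t ∈ tsupport f,
            ∏ j ∈ Finset.range n, |w ((α.toEquiv ^ ((j : ℤ) - (n : ℤ))) t)|) *
          segalNorm τ f :=
  weighted_composition_iterate_norm_bound_general α τ w hτc hinv hwb f hf hfc
end

section
/- Let X = ℝ, M > 1, and choose ε > 0 with 1+ε < M and 1−ε > 1/M. Let α(t) := t−1 and let (w_j)_{j∈ℤ} ⊆ C_b(ℝ) satisfy: ‖w_j‖_∞‖w_j^{-1}‖_∞ < M for all j; |w_j(t)| ≤ 1−ε for all j ∈ ℕ and t ≥ 0; |w_j(t)| ≥ 1+ε for all j ∈ ℤ∖ℕ and t ≤ 0. Then for every compact K ⊆ ℝ and finite I ⊆ ℕ there exists a strictly increasing sequence (r_k) in ℕ such that for all j ∈ I, lim_k sup_{t∈K} ∏_{i=1}^{r_k} |w_{i+j}(α^{-i}(t))| = 0 and lim_k sup_{t∈K} ∏_{i=1}^{r_k}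 |w_{j+1−i}(α^{i−1}(t))|^{-1} = 0. -/
open Filter

private lemma prod_Ioc_consec_int (f : ℤ → ℝ) {a b c : ℤ} (h1 : a ≤ b) (h2 : b ≤ c) :
    ((∏ i ∈ Finset.Ioc a b, f i) * ∏ i ∈ Finset.Ioc b c, f i) = ∏ i ∈ Finset.Ioc a c, f i := by
  rw [← Finset.Ioc_union_Ioc_eq_Ioc h1 h2, Finset.prod_union]
  exact Finset.disjoint_left.2 fun x hx h'x =>
    absurd (Finset.mem_Ioc.1 h'x).1 (not_lt.2 (Finset.mem_Ioc.1 hx).2)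


/-- For `α(t) = t − 1` and weights `(w_j)_{j∈ℤ} ⊆ C_b(ℝ)` with
`‖w_j‖_∞‖w_j⁻¹‖_∞ < M`, `|w_j| ≤ 1−ε` on `[0,∞)` for `j ≥ 1`, and `|w_j| ≥ 1+ε` on
`(−∞,0]` for `j ≤ 0`, every compact `K ⊆ ℝ` and finite `I ⊆ ℕ` admit a strictly
increasing sequence `(r_k)` with
`sup_{t∈K} ∏_{i=1}^{r_k} |w_{i+j}(α^{-i}(t))| → 0` and
`sup_{t∈K} ∏_{i=1}^{r_k} |w_{j+1−i}(α^{i−1}(t))|⁻¹ → 0` for all `j ∈ I`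
(here `α^{-i}(t) = t + i` and `α^{i−1}(t) = t − (i−1)`). -/
theorem example_weights_satisfy_decay (M ε : ℝ) (hM : 1 < M)
    (hε0 : 0 < ε) (hε1 : 1 + ε < M) (hε2 : 1 / M < 1 - ε)
    (w : ℤ → ℝ → ℝ)
    (hwc : ∀ j, Continuous (w j)) (hwb : ∀ j, ∃ C, ∀ t, |w j t| ≤ C)
    (hprod : ∀ j : ℤ, (⨆ t : ℝ, |w j t|) * (⨆ t : ℝ, |w j t|⁻¹) < M)
    (hpos : ∀ j : ℤ, 1 ≤ j → ∀ t : ℝ, 0 ≤ t → |w j t| ≤ 1 - ε)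
    (hneg : ∀ j : ℤ, j ≤ 0 → ∀ t : ℝ, t ≤ 0 → 1 + ε ≤ |w j t|) :
    ∀ K : Set ℝ, IsCompact K → ∀ I : Finset ℤ, (∀ j ∈ I, 1 ≤ j) →
      ∃ r : ℕ → ℕ, StrictMono r ∧ ∀ j ∈ I,
        Tendsto (fun k : ℕ =>
            ⨆ t ∈ K, ∏ i ∈ Finset.Icc (1 : ℤ) (r k : ℤ), |w (i + j) (t + (i : ℝ))|)
          atTop (nhds 0) ∧
        Tendsto (fun k : ℕ =>
            ⨆ t ∈ K, ∏ i ∈ Finset.Icc (1 : ℤ) (r k : ℤ),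
              |w (j + 1 - i) (t - ((i : ℝ) - 1))|⁻¹)
          atTop (nhds 0) := by
  intro K hK I hI
  obtain ⟨T₀, hT₀⟩ := hK.isBounded.subset_closedBall 0
  set T : ℝ := max T₀ 0 with hTdef
  have hT : ∀ t ∈ K, |t| ≤ T := by
    intro t ht
    have h := hT₀ ht
    rw [Metric.mem_closedBall, Real.dist_eq, sub_zero] at h
    exact h.trans (le_max_left _ _)
  have hTnonneg : (0:ℝ) ≤ T := le_max_right _ _
  choose C hC using hwb
  have hCnonneg : ∀ c, 0 ≤ C c := fun c => (abs_nonneg _).trans (hC c 0)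
  have hMpos : (0:ℝ) < M := lt_trans one_pos hM
  have hq0 : (0:ℝ) < 1 - ε := lt_trans (by positivity) hε2
  have hq1 : 1 - ε < 1 := by linarith
  have h1ε : (1:ℝ) < 1 + ε := by linarith
  have h1εpos : (0:ℝ) < 1 + ε := by linarith
  have hCge : ∀ c : ℤ, c ≤ 0 → 1 + ε ≤ C c :=
    fun c hc => le_trans (hneg c hc 0 le_rfl) (hC c 0)
  refine ⟨id, strictMono_id, ?_⟩
  intro j hj
  have hj1 : 1 ≤ j := hI j hj
  -- choose the cutoff N
  set N : ℕ := max ⌈T⌉₊ j.toNat with hNdef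
  have hNT : T ≤ (N:ℝ) := le_trans (Nat.le_ceil T) (by exact_mod_cast Nat.cast_le.2 (le_max_left _ _))
  have hNj : j ≤ (N:ℤ) := by
    have : j.toNat ≤ N := le_max_right _ _
    omega
  have hIcc : ∀ k : ℕ, Finset.Icc (1:ℤ) (k:ℤ) = Finset.Ioc 0 (k:ℤ) := by
    intro k; ext x; simp only [Finset.mem_Icc, Finset.mem_Ioc]; omega
  simp only [id_eq]
  constructor
  · -- first limit
    set D : ℝ := ∏ i ∈ Finset.Ioc (0:ℤ) (N:ℤ), C (i + j) with hD
    have hDnn : 0 ≤ D := Finset.prod_nonneg fun i _ => hCnonneg _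
    have key : ∀ k : ℕ, N ≤ k →
        (⨆ t ∈ K, ∏ i ∈ Finset.Icc (1:ℤ) (k:ℤ), |w (i + j) (t + (i:ℝ))|)
          ≤ D * (1 - ε) ^ (k - N) := by
      intro k hk
      have hbd : 0 ≤ D * (1 - ε) ^ (k - N) := by positivity
      refine Real.iSup_le (fun t => Real.iSup_le (fun ht => ?_) hbd) hbd
      rw [hIcc]
      have hsplit := prod_Ioc_consec_int
        (fun i : ℤ => |w (i + j) (t + (i:ℝ))|)
        (by exact_mod_cast Int.ofNat_nonneg N : (0:ℤ) ≤ (N:ℤ))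
        (by exact_mod_cast hk : (N:ℤ) ≤ (k:ℤ))
      rw [← hsplit]
      have h1 : ∏ i ∈ Finset.Ioc (0:ℤ) (N:ℤ), |w (i + j) (t + (i:ℝ))| ≤ D :=
        Finset.prod_le_prod (fun i _ => abs_nonneg _) (fun i _ => hC _ _)
      have h2 : ∏ i ∈ Finset.Ioc (N:ℤ) (k:ℤ), |w (i + j) (t + (i:ℝ))| ≤ (1 - ε) ^ (k - N) := by
        have hle : ∏ i ∈ Finset.Ioc (N:ℤ) (k:ℤ), |w (i + j) (t + (i:ℝ))|
            ≤ ∏ _i ∈ Finset.Ioc (N:ℤ) (k:ℤ), (1 - ε) := by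
          refine Finset.prod_le_prod (fun i _ => abs_nonneg _) (fun i hi => ?_)
          rw [Finset.mem_Ioc] at hi
          refine hpos (i + j) (by omega) _ ?_
          have hi1 : (N:ℝ) + 1 ≤ (i:ℝ) := by exact_mod_cast Int.add_one_le_iff.2 hi.1
          have ht' : -T ≤ t := neg_le_of_abs_le (hT t ht)
          linarith
        rwa [Finset.prod_const, Int.card_Ioc, show ((k:ℤ) - (N:ℤ)).toNat = k - N by omega] at hle
      exact mul_le_mul h1 h2 (Finset.prod_nonneg fun i _ => abs_nonneg _) hDnn
    have hlim : Tendsto (fun k : ℕ => D * (1 - ε) ^ (k - N)) atTop (nhds 0) := by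
      have h1 : Tendsto (fun k : ℕ => (1 - ε) ^ (k - N)) atTop (nhds 0) :=
        (tendsto_pow_atTop_nhds_zero_of_lt_one hq0.le hq1).comp (tendsto_sub_atTop_nat N)
      simpa using h1.const_mul D
    refine tendsto_of_tendsto_of_tendsto_of_le_of_le' tendsto_const_nhds hlim ?_ ?_
    · exact Eventually.of_forall fun k => Real.iSup_nonneg fun t =>
        Real.iSup_nonneg fun _ => Finset.prod_nonneg fun i _ => abs_nonneg _
    · exact eventually_atTop.2 ⟨N, key⟩
  · -- second limit
    by_cases hbdd : BddAbove ((fun t : ℝ =>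
        ∏ i ∈ Finset.Ioc (0:ℤ) (N:ℤ), |w (j + 1 - i) (t - ((i:ℝ) - 1))|⁻¹) '' K)
    · obtain ⟨b, hb⟩ := hbdd
      set G : ℝ := max b 0 with hG
      have hGnn : 0 ≤ G := le_max_right _ _
      have key : ∀ k : ℕ, N ≤ k →
          (⨆ t ∈ K, ∏ i ∈ Finset.Icc (1:ℤ) (k:ℤ), |w (j + 1 - i) (t - ((i:ℝ) - 1))|⁻¹)
            ≤ G * ((1 + ε)⁻¹) ^ (k - N) := by
        intro k hk
        have hbd : 0 ≤ G * ((1 + ε)⁻¹) ^ (k - N) := by positivity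
        refine Real.iSup_le (fun t => Real.iSup_le (fun ht => ?_) hbd) hbd
        rw [hIcc]
        have hsplit := prod_Ioc_consec_int
          (fun i : ℤ => |w (j + 1 - i) (t - ((i:ℝ) - 1))|⁻¹)
          (by exact_mod_cast Int.ofNat_nonneg N : (0:ℤ) ≤ (N:ℤ))
          (by exact_mod_cast hk : (N:ℤ) ≤ (k:ℤ))
        rw [← hsplit]
        have h1 : ∏ i ∈ Finset.Ioc (0:ℤ) (N:ℤ), |w (j + 1 - i) (t - ((i:ℝ) - 1))|⁻¹ ≤ G :=
          le_trans (hb ⟨t, ht, rfl⟩) (le_max_left _ _)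
        have h2 : ∏ i ∈ Finset.Ioc (N:ℤ) (k:ℤ), |w (j + 1 - i) (t - ((i:ℝ) - 1))|⁻¹
            ≤ ((1 + ε)⁻¹) ^ (k - N) := by
          have hle : ∏ i ∈ Finset.Ioc (N:ℤ) (k:ℤ), |w (j + 1 - i) (t - ((i:ℝ) - 1))|⁻¹
              ≤ ∏ _i ∈ Finset.Ioc (N:ℤ) (k:ℤ), (1 + ε)⁻¹ := by
            refine Finset.prod_le_prod (fun i _ => inv_nonneg.2 (abs_nonneg _))
              (fun i hi => ?_)
            rw [Finset.mem_Ioc] at hi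
            have harg : t - ((i:ℝ) - 1) ≤ 0 := by
              have hi1 : (N:ℝ) + 1 ≤ (i:ℝ) := by exact_mod_cast Int.add_one_le_iff.2 hi.1
              have ht' : t ≤ T := le_of_abs_le (hT t ht)
              linarith
            exact inv_anti₀ h1εpos (hneg (j + 1 - i) (by omega) _ harg)
          rwa [Finset.prod_const, Int.card_Ioc,
            show ((k:ℤ) - (N:ℤ)).toNat = k - N by omega] at hle
        exact mul_le_mul h1 h2 (Finset.prod_nonneg fun i _ => inv_nonneg.2 (abs_nonneg _)) hGnn
      have hlim : Tendsto (fun k : ℕ => G * ((1 + ε)⁻¹) ^ (k - N)) atTop (nhds 0) := by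
        have h1 : Tendsto (fun k : ℕ => ((1 + ε)⁻¹) ^ (k - N)) atTop (nhds 0) :=
          (tendsto_pow_atTop_nhds_zero_of_lt_one (by positivity)
            (by rw [inv_lt_one_iff₀]; right; exact h1ε)).comp (tendsto_sub_atTop_nat N)
        simpa using h1.const_mul G
      refine tendsto_of_tendsto_of_tendsto_of_le_of_le' tendsto_const_nhds hlim ?_ ?_
      · exact Eventually.of_forall fun k => Real.iSup_nonneg fun t =>
          Real.iSup_nonneg fun _ => Finset.prod_nonneg fun i _ => inv_nonneg.2 (abs_nonneg _)
      · exact eventually_atTop.2 ⟨N, key⟩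
    · -- unbounded case: the sup is 0 (junk value) for all k ≥ N
      have hzero : ∀ k : ℕ, N ≤ k →
          (⨆ t ∈ K, ∏ i ∈ Finset.Icc (1:ℤ) (k:ℤ), |w (j + 1 - i) (t - ((i:ℝ) - 1))|⁻¹) = 0 := by
        intro k hk
        apply Real.iSup_of_not_bddAbove
        intro hbdd2
        apply hbdd
        obtain ⟨b, hb⟩ := hbdd2
        set c : ℝ := ∏ i ∈ Finset.Ioc (N:ℤ) (k:ℤ), (C (j + 1 - i))⁻¹ with hc
        have hcpos : 0 < c := Finset.prod_pos fun i hi => by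
          rw [Finset.mem_Ioc] at hi
          exact inv_pos.2 (lt_of_lt_of_le h1εpos (hCge _ (by omega)))
        refine ⟨b / c, ?_⟩
        rintro x ⟨t, ht, rfl⟩
        have hP : (⨆ _ : t ∈ K, ∏ i ∈ Finset.Icc (1:ℤ) (k:ℤ),
            |w (j + 1 - i) (t - ((i:ℝ) - 1))|⁻¹) ≤ b := hb (Set.mem_range_self t)
        rw [ciSup_pos ht] at hP
        rw [hIcc] at hP
        have hsplit := prod_Ioc_consec_int
          (fun i : ℤ => |w (j + 1 - i) (t - ((i:ℝ) - 1))|⁻¹)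
          (by exact_mod_cast Int.ofNat_nonneg N : (0:ℤ) ≤ (N:ℤ))
          (by exact_mod_cast hk : (N:ℤ) ≤ (k:ℤ))
        rw [← hsplit] at hP
        have h2 : c ≤ ∏ i ∈ Finset.Ioc (N:ℤ) (k:ℤ), |w (j + 1 - i) (t - ((i:ℝ) - 1))|⁻¹ := by
          refine Finset.prod_le_prod (fun i hi => inv_nonneg.2 (hCnonneg _)) (fun i hi => ?_)
          rw [Finset.mem_Ioc] at hi
          have harg : t - ((i:ℝ) - 1) ≤ 0 := by
            have hi1 : (N:ℝ) + 1 ≤ (i:ℝ) := by exact_mod_cast Int.add_one_le_iff.2 hi.1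
            have ht' : t ≤ T := le_of_abs_le (hT t ht)
            linarith
          have hwpos : 0 < |w (j + 1 - i) (t - ((i:ℝ) - 1))| :=
            lt_of_lt_of_le h1εpos (hneg (j + 1 - i) (by omega) _ harg)
          exact inv_anti₀ hwpos (hC _ _)
        have h3 : (∏ i ∈ Finset.Ioc (0:ℤ) (N:ℤ), |w (j + 1 - i) (t - ((i:ℝ) - 1))|⁻¹) * c ≤ b := by
          refine le_trans ?_ hP
          exact mul_le_mul_of_nonneg_left h2
            (Finset.prod_nonneg fun i _ => inv_nonneg.2 (abs_nonneg _))
        rw [le_div_iff₀ hcpos]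
        exact h3
      refine Tendsto.congr' ?_ tendsto_const_nhds
      filter_upwards [eventually_ge_atTop N] with k hk
      exact (hzero k hk).symm
end
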